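/- If a preference profile P (strict preferences) admits a stable matching M that leaves s agents unmatched, then any globally d-nearly stable perfect matching for P requires d ≥ s/2. Equivalently: if in a profile obtained from P by t swaps there is a perfect stable matching, then 2t ≥ s. -/

import Mathlib

open Finset

/-- A preference profile: each agent on side `U` has a strict (nodup), possibly
incomplete preference list over the agents of `W`, and vice versa.  The rank of
an agent `y` in the list `l` of an agent `x` is `l.idxOf y` (the number of
agents that `x` strictly prefers to `y`). -/
structure Profile (U W : Type) where
  prefU : U → List W
  prefW : W → List U
  nodupU : ∀ u, (prefU u).Nodup
  nodupW : ∀ w, (prefW w).Nodup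

/-- A matching between `U` and `W`. -/
structure Matching (U W : Type) where
  mu : U → Option W
  mw : W → Option U
  consistent : ∀ u w, mu u = some w ↔ mw w = some u

variable {U W : Type} [DecidableEq U] [DecidableEq W]

/-- `{u, w}` is a blocking pair of `M` in `P`: they are mutually acceptable,
not matched together, and each strictly prefers the other to its current
partner (or is unmatched). -/
def IsBlocking (P : Profile U W) (M : Matching U W) (u : U) (w : W) : Prop :=
  w ∈ P.prefU u ∧ u ∈ P.prefW w ∧ M.mu u ≠ some w ∧
  (∀ w', M.mu u = some w' → (P.prefU u).idxOf w < (P.prefU u).idxOf w') ∧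
  (∀ u', M.mw w = some u' → (P.prefW w).idxOf u < (P.prefW w).idxOf u')

/-- `M` is stable for `P`: it is individually rational (matched pairs are
mutually acceptable) and admits no blocking pair. -/
def IsStable (P : Profile U W) (M : Matching U W) : Prop :=
  (∀ u w, M.mu u = some w → w ∈ P.prefU u ∧ u ∈ P.prefW w) ∧
  ∀ u w, ¬ IsBlocking P M u w

/-- Number of discordant pairs (Kendall tau distance) between two lists. -/
def discordant {α : Type*} [DecidableEq α] (l1 l2 : List α) : ℕ :=
  ((l1.toFinset ×ˢ l1.toFinset).filter
    (fun p => l1.idxOf p.1 < l1.idxOf p.2 ∧ l2.idxOf p.2 < l2.idxOf p.1)).card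

/-- Swap distance between two preference lists: the Kendall tau distance (the
minimum number of adjacent swaps transforming one into the other) if they rank
the same set of agents, and `⊤` otherwise. -/
def listDist {α : Type*} [DecidableEq α] (l1 l2 : List α) : ℕ∞ :=
  if l1.toFinset = l2.toFinset then ((discordant l1 l2 : ℕ) : ℕ∞) else ⊤

/-- Swap distance `τ(P1, P2)` between two profiles: sum over all agents of the
swap distances between their preference lists. -/
def profDist [Fintype U] [Fintype W] (P1 P2 : Profile U W) : ℕ∞ :=
  (∑ u, listDist (P1.prefU u) (P2.prefU u)) + (∑ w, listDist (P1.prefW w) (P2.prefW w))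

/-- `M` is `d`-robust for `P`: stable in every profile at swap distance at most `d`. -/
def Robust [Fintype U] [Fintype W] (P : Profile U W) (d : ℕ) (M : Matching U W) : Prop :=
  ∀ P' : Profile U W, profDist P P' ≤ (d : ℕ∞) → IsStable P' M

/-- `M` is globally `d`-nearly stable for `P`: stable in some profile at swap
distance at most `d`. -/
def GloballyNearlyStable [Fintype U] [Fintype W] (P : Profile U W) (d : ℕ)
    (M : Matching U W) : Prop :=
  ∃ P' : Profile U W, profDist P P' ≤ (d : ℕ∞) ∧ IsStable P' M

/-- `M` is locally `d`-nearly stable for `P`: stable in some profile in which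
each agent's list changed by at most `d` swaps. -/
def LocallyNearlyStable (P : Profile U W) (d : ℕ) (M : Matching U W) : Prop :=
  ∃ P' : Profile U W,
    (∀ u, listDist (P.prefU u) (P'.prefU u) ≤ (d : ℕ∞)) ∧
    (∀ w, listDist (P.prefW w) (P'.prefW w) ≤ (d : ℕ∞)) ∧
    IsStable P' M

/-- Every agent is matched. -/
def IsPerfect (M : Matching U W) : Prop :=
  (∀ u, M.mu u ≠ none) ∧ (∀ w, M.mw w ≠ none)

/-- Egalitarian cost: sum over matched agents of the rank of their partner. -/
def egalCost [Fintype U] [Fintype W] (P : Profile U W) (M : Matching U W) : ℕ :=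
  (∑ u, (M.mu u).elim 0 (fun w => (P.prefU u).idxOf w)) +
  (∑ w, (M.mw w).elim 0 (fun u => (P.prefW w).idxOf u))



section Aux

open List

/-- If two nodup lists rank the same set and have no discordant pair, they
order every pair the same way. -/
lemma indexOf_lt_iff_of_discordant_zero {α : Type*} [DecidableEq α] {l1 l2 : List α}
    (h0 : discordant l1 l2 = 0) (_hn1 : l1.Nodup) (_hn2 : l2.Nodup)
    (ht : l1.toFinset = l2.toFinset) {a b : α} (ha : a ∈ l1) (hb : b ∈ l1) :
    (l1.idxOf a < l1.idxOf b ↔ l2.idxOf a < l2.idxOf b) := by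
  have ha2 : a ∈ l2 := by rw [← List.mem_toFinset, ← ht, List.mem_toFinset]; exact ha
  have hb2 : b ∈ l2 := by rw [← List.mem_toFinset, ← ht, List.mem_toFinset]; exact hb
  rcases eq_or_ne a b with rfl | hne
  · simp
  have hmem : ∀ x y : α, x ∈ l1 → y ∈ l1 → l1.idxOf x < l1.idxOf y →
      l2.idxOf y < l2.idxOf x → False := by
    intro x y hx hy h1 h2
    have hin : (x, y) ∈ (l1.toFinset ×ˢ l1.toFinset).filter
        (fun p => l1.idxOf p.1 < l1.idxOf p.2 ∧ l2.idxOf p.2 < l2.idxOf p.1) := by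
      simp only [Finset.mem_filter, Finset.mem_product, List.mem_toFinset]
      exact ⟨⟨hx, hy⟩, h1, h2⟩
    have hpos := Finset.card_pos.mpr ⟨_, hin⟩
    rw [discordant] at h0
    omega
  constructor
  · intro h1
    rcases lt_trichotomy (l2.idxOf a) (l2.idxOf b) with h | h | h
    · exact h
    · exact absurd ((List.idxOf_inj ha2).mp h) hne
    · exact (hmem a b ha hb h1 h).elim
  · intro h2
    rcases lt_trichotomy (l1.idxOf a) (l1.idxOf b) with h | h | h
    · exact h
    · exact absurd ((List.idxOf_inj ha).mp h) hne
    · exact (hmem b a hb ha h h2).elim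

/-- Iterate a partial function. -/
def chainF {U : Type} (g : U → Option U) (u0 : U) : ℕ → Option U
  | 0 => some u0
  | n+1 => (chainF g u0 n).bind g

lemma chainF_succ {U : Type} (g : U → Option U) (u0 : U) (n : ℕ) :
    chainF g u0 (n+1) = (chainF g u0 n).bind g := rfl

lemma chainF_succ_some {U : Type} {g : U → Option U} {u0 : U} {n : ℕ} {x : U}
    (h : chainF g u0 (n+1) = some x) : ∃ y, chainF g u0 n = some y ∧ g y = some x := by
  rw [chainF_succ] at h
  cases hc : chainF g u0 n with
  | none => rw [hc] at h; simp at h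
  | some y => rw [hc] at h; exact ⟨y, rfl, h⟩

lemma chainF_inj {U : Type} {g : U → Option U}
    (hrev : ∀ ⦃y y' x : U⦄, g y = some x → g y' = some x → y = y')
    {R : U → Prop} (hR : ∀ ⦃y x : U⦄, g y = some x → ¬ R x) :
    ∀ m n : ℕ, ∀ u0 u1 x : U, R u0 → R u1 → chainF g u0 m = some x →
      chainF g u1 n = some x → u0 = u1 ∧ m = n := by
  intro m
  induction m with
  | zero =>
    intro n u0 u1 x h0 h1 hm hn
    cases n with
    | zero =>
      simp only [chainF, Option.some.injEq] at hm hn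
      exact ⟨hm.trans hn.symm, rfl⟩
    | succ n =>
      obtain ⟨y, hy, hgy⟩ := chainF_succ_some hn
      simp only [chainF, Option.some.injEq] at hm
      exact absurd (hm ▸ h0) (hR hgy)
  | succ m ih =>
    intro n u0 u1 x h0 h1 hm hn
    cases n with
    | zero =>
      obtain ⟨y, hy, hgy⟩ := chainF_succ_some hm
      simp only [chainF, Option.some.injEq] at hn
      exact absurd (hn ▸ h1) (hR hgy)
    | succ n =>
      obtain ⟨y, hy, hgy⟩ := chainF_succ_some hm
      obtain ⟨y', hy', hgy'⟩ := chainF_succ_some hn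
      have hyy : y = y' := hrev hgy hgy'
      obtain ⟨e1, e2⟩ := ih n u0 u1 y h0 h1 hy (by rw [← hyy] at hy'; exact hy')
      exact ⟨e1, by omega⟩

lemma chainF_term {U : Type} [Finite U] {g : U → Option U}
    (hrev : ∀ ⦃y y' x : U⦄, g y = some x → g y' = some x → y = y')
    {R : U → Prop} (hR : ∀ ⦃y x : U⦄, g y = some x → ¬ R x)
    (u0 : U) (h0 : R u0) :
    ∃ n x, chainF g u0 n = some x ∧ g x = none := by
  by_contra hcon
  push_neg at hcon
  have hall : ∀ n, ∃ x, chainF g u0 n = some x := by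
    intro n
    induction n with
    | zero => exact ⟨u0, rfl⟩
    | succ n ih =>
      obtain ⟨x, hx⟩ := ih
      cases hgx : g x with
      | none => exact absurd hgx (hcon n x hx)
      | some y => exact ⟨y, by rw [chainF_succ, hx]; simpa using hgx⟩
  choose F hF using hall
  obtain ⟨m, n, hmn, he⟩ := Finite.exists_ne_map_eq_of_infinite F
  exact hmn (chainF_inj hrev hR m n u0 u0 (F m) h0 h0 (hF m) (by rw [he]; exact hF n)).2

/-- The key counting lemma: the number of agents on side `U` that a stable
matching `M` of `P` leaves unmatched is at most the total number of discordant
pairs between `P` and a profile `P'` (ranking the same sets) in which a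
`U`-perfect matching `M'` is stable. -/
lemma core {U W : Type} [DecidableEq U] [DecidableEq W] [Fintype U] [Fintype W]
    (P P' : Profile U W) (M M' : Matching U W)
    (hM : IsStable P M) (h' : IsStable P' M')
    (f : U → W) (hf : ∀ u, M'.mu u = some (f u))
    (htU : ∀ u, (P.prefU u).toFinset = (P'.prefU u).toFinset)
    (htW : ∀ w, (P.prefW w).toFinset = (P'.prefW w).toFinset) :
    (Finset.univ.filter (fun u : U => M.mu u = none)).card ≤
      (∑ u, discordant (P.prefU u) (P'.prefU u)) +
      (∑ w, discordant (P.prefW w) (P'.prefW w)) := by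
  classical
  have hfw : ∀ u, M'.mw (f u) = some u := fun u => (M'.consistent u (f u)).mp (hf u)
  have hfinj : Function.Injective f := by
    intro u u' h
    have h1 := hfw u
    rw [h] at h1
    rw [hfw u'] at h1
    exact (Option.some_injective U h1).symm
  set g : U → Option U := fun u => M.mw (f u) with hg
  have hgmu : ∀ {y x : U}, g y = some x → M.mu x = some (f y) := by
    intro y x h
    rw [hg] at h
    exact (M.consistent x (f y)).mpr h
  have hrev : ∀ ⦃y y' x : U⦄, g y = some x → g y' = some x → y = y' := by
    intro y y' x h1 h2
    have := (hgmu h1).symm.trans (hgmu h2)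
    exact hfinj (Option.some_injective W this)
  have hR : ∀ ⦃y x : U⦄, g y = some x → ¬ (M.mu x = none) := by
    intro y x h hx
    rw [hgmu h] at hx
    cases hx
  have memU : ∀ {u : U} {w : W}, w ∈ P'.prefU u → w ∈ P.prefU u := by
    intro u w h
    rw [← List.mem_toFinset, htU u, List.mem_toFinset]; exact h
  have memU' : ∀ {u : U} {w : W}, w ∈ P.prefU u → w ∈ P'.prefU u := by
    intro u w h
    rw [← List.mem_toFinset, ← htU u, List.mem_toFinset]; exact h
  have memW : ∀ {w : W} {u : U}, u ∈ P'.prefW w → u ∈ P.prefW w := by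
    intro w u h
    rw [← List.mem_toFinset, htW w, List.mem_toFinset]; exact h
  have memW' : ∀ {w : W} {u : U}, u ∈ P.prefW w → u ∈ P'.prefW w := by
    intro w u h
    rw [← List.mem_toFinset, ← htW w, List.mem_toFinset]; exact h
  have accU' : ∀ u : U, f u ∈ P'.prefU u := fun u => (h'.1 u (f u) (hf u)).1
  have accW' : ∀ u : U, u ∈ P'.prefW (f u) := fun u => (h'.1 u (f u) (hf u)).2
  have accU : ∀ u : U, f u ∈ P.prefU u := fun u => memU (accU' u)
  have accW : ∀ u : U, u ∈ P.prefW (f u) := fun u => memW (accW' u)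
  have key : ∀ u0 : U, M.mu u0 = none → ∃ x : U, (∃ n, chainF g u0 n = some x) ∧
      (1 ≤ discordant (P.prefU x) (P'.prefU x) ∨
       1 ≤ discordant (P.prefW (f x)) (P'.prefW (f x))) := by
    intro u0 hu0
    by_contra hcon
    push_neg at hcon
    have hz : ∀ x : U, (∃ n, chainF g u0 n = some x) →
        discordant (P.prefU x) (P'.prefU x) = 0 ∧
        discordant (P.prefW (f x)) (P'.prefW (f x)) = 0 := by
      intro x hx
      have := hcon x hx
      omega
    have S : ∀ n x, chainF g u0 n = some x →
        ∀ w', M.mu x = some w' → (P.prefU x).idxOf (f x) < (P.prefU x).idxOf w' := by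
      intro n
      induction n with
      | zero =>
        intro x hx w' hw'
        simp only [chainF, Option.some.injEq] at hx
        subst hx
        rw [hu0] at hw'
        cases hw'
      | succ n ih =>
        intro x' hx' w'' hw''
        obtain ⟨x, hx, hgx⟩ := chainF_succ_some hx'
        have hmux' : M.mu x' = some (f x) := hgmu hgx
        have hw : w'' = f x := by
          rw [hmux'] at hw''
          exact (Option.some_injective W hw'').symm
        subst hw
        have hxx' : x ≠ x' := by
          intro h
          subst h
          exact absurd (ih x hx (f x) hmux') (lt_irrefl _)
        have hne1 : M.mu x ≠ some (f x) := by
          intro h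
          exact absurd (ih x hx (f x) h) (lt_irrefl _)
        -- Step A: (x, f x) does not block M in P, so f x M-prefers x' to x.
        have hnotW : ¬ ∀ u', M.mw (f x) = some u' →
            (P.prefW (f x)).idxOf x < (P.prefW (f x)).idxOf u' := by
          intro hcw
          exact hM.2 x (f x) ⟨accU x, accW x, hne1, ih x hx, hcw⟩
        push_neg at hnotW
        obtain ⟨u', hu', hle⟩ := hnotW
        have hux : u' = x' := by
          have hgx2 : M.mw (f x) = some x' := by rw [hg] at hgx; exact hgx
          exact Option.some_injective U (hu'.symm.trans hgx2)
        rw [hux] at hle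
        have hx'mem : x' ∈ P.prefW (f x) := (hM.1 x' (f x) hmux').2
        have hxmem : x ∈ P.prefW (f x) := accW x
        have hlt1 : (P.prefW (f x)).idxOf x' < (P.prefW (f x)).idxOf x := by
          rcases lt_or_eq_of_le hle with h | h
          · exact h
          · exact absurd (((List.idxOf_inj hx'mem).mp h)) (fun e => hxx' e.symm)
        -- Step B: no discordance at f x, transfer to P'.
        have hdw := (hz x ⟨n, hx⟩).2
        have hlt2 : (P'.prefW (f x)).idxOf x' < (P'.prefW (f x)).idxOf x :=
          (indexOf_lt_iff_of_discordant_zero hdw (P.nodupW _) (P'.nodupW _) (htW _)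
            hx'mem hxmem).mp hlt1
        -- Step C: (x', f x) does not block M' in P', so x' M'-prefers f x' to f x.
        have haccU'x' : f x ∈ P'.prefU x' := memU' (hM.1 x' (f x) hmux').1
        have haccW'x' : x' ∈ P'.prefW (f x) := memW' hx'mem
        have hne2 : M'.mu x' ≠ some (f x) := by
          rw [hf x']
          intro h
          exact hxx' (hfinj (Option.some_injective W h)).symm
        have hnotU : ¬ ∀ w', M'.mu x' = some w' →
            (P'.prefU x').idxOf (f x) < (P'.prefU x').idxOf w' := by
          intro hcu
          refine h'.2 x' (f x) ⟨haccU'x', haccW'x', hne2, hcu, ?_⟩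
          intro u'' hu''
          rw [hfw x] at hu''
          rw [← Option.some_injective U hu'']
          exact hlt2
        push_neg at hnotU
        obtain ⟨w', hw', hle'⟩ := hnotU
        have hwfx' : w' = f x' := (Option.some_injective W ((hf x').symm.trans hw')).symm
        subst hwfx'
        have hfne : f x' ≠ f x := fun h => hxx' (hfinj h).symm
        have hm1 : f x ∈ P'.prefU x' := haccU'x'
        have hm2 : f x' ∈ P'.prefU x' := accU' x'
        have hlt3 : (P'.prefU x').idxOf (f x') < (P'.prefU x').idxOf (f x) := by
          rcases lt_or_eq_of_le hle' with h | h
          · exact h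
          · exact absurd ((List.idxOf_inj hm2).mp h) hfne
        -- Step D: no discordance at x', transfer back to P.
        have hdu := (hz x' ⟨n+1, hx'⟩).1
        exact (indexOf_lt_iff_of_discordant_zero hdu (P.nodupU _) (P'.nodupU _) (htU _)
          (accU x') (hM.1 x' (f x) hmux').1).mpr hlt3
    -- terminal element of the chain gives a blocking pair of M in P
    obtain ⟨n, x, hx, hgx⟩ := chainF_term (g := g) hrev (R := fun u => M.mu u = none) hR u0 hu0
    have hgx2 : M.mw (f x) = none := by rw [hg] at hgx; exact hgx
    refine hM.2 x (f x) ⟨accU x, accW x, ?_, S n x hx, ?_⟩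
    · intro h
      have := (M.consistent x (f x)).mp h
      rw [this] at hgx2
      cases hgx2
    · intro u' hu'
      rw [hu'] at hgx2
      cases hgx2
  -- counting
  choose! xw hxw hdisc using key
  set A : Finset U := Finset.univ.filter (fun u : U => M.mu u = none) with hA
  have hmemA : ∀ u ∈ A, M.mu u = none := by
    intro u hu
    rw [hA] at hu
    exact (Finset.mem_filter.mp hu).2
  have hinj : Set.InjOn xw ↑A := by
    intro u hu u' hu' he
    obtain ⟨n, hn⟩ := hxw u (hmemA u hu)
    obtain ⟨n', hn'⟩ := hxw u' (hmemA u' hu')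
    rw [he] at hn
    exact (chainF_inj hrev (R := fun u => M.mu u = none) hR n n' u u' (xw u')
      (hmemA u hu) (hmemA u' hu') hn hn').1
  have hcard : A.card = (A.image xw).card := (Finset.card_image_of_injOn hinj).symm
  have hone : ∀ x ∈ A.image xw,
      1 ≤ discordant (P.prefU x) (P'.prefU x) + discordant (P.prefW (f x)) (P'.prefW (f x)) := by
    intro x hx
    obtain ⟨u, hu, rfl⟩ := Finset.mem_image.mp hx
    rcases hdisc u (hmemA u hu) with h | h <;> omega
  calc A.card = (A.image xw).card := hcard
    _ = ∑ _x ∈ A.image xw, 1 := by rw [Finset.card_eq_sum_ones]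
    _ ≤ ∑ x ∈ A.image xw,
        (discordant (P.prefU x) (P'.prefU x) + discordant (P.prefW (f x)) (P'.prefW (f x))) :=
      Finset.sum_le_sum hone
    _ = (∑ x ∈ A.image xw, discordant (P.prefU x) (P'.prefU x)) +
        (∑ x ∈ A.image xw, discordant (P.prefW (f x)) (P'.prefW (f x))) :=
      Finset.sum_add_distrib
    _ ≤ (∑ u, discordant (P.prefU u) (P'.prefU u)) +
        (∑ w, discordant (P.prefW w) (P'.prefW w)) := by
      gcongr
      · exact Finset.subset_univ _
      · calc ∑ x ∈ A.image xw, discordant (P.prefW (f x)) (P'.prefW (f x))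
            = ∑ w ∈ (A.image xw).image f, discordant (P.prefW w) (P'.prefW w) :=
            by rw [Finset.sum_image (fun a _ b _ h => hfinj h)]
          _ ≤ ∑ w, discordant (P.prefW w) (P'.prefW w) :=
            Finset.sum_le_sum_of_subset (Finset.subset_univ _)

/-- Flip a profile. -/
def Profile.flip {U W : Type} (P : Profile U W) : Profile W U :=
  ⟨P.prefW, P.prefU, P.nodupW, P.nodupU⟩

/-- Flip a matching. -/
def Matching.flip {U W : Type} (M : Matching U W) : Matching W U :=
  ⟨M.mw, M.mu, fun w u => (M.consistent u w).symm⟩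

@[simp] lemma Profile.flip_prefU {U W : Type} (P : Profile U W) : P.flip.prefU = P.prefW := rfl
@[simp] lemma Profile.flip_prefW {U W : Type} (P : Profile U W) : P.flip.prefW = P.prefU := rfl
@[simp] lemma Matching.flip_mu {U W : Type} (M : Matching U W) : M.flip.mu = M.mw := rfl
@[simp] lemma Matching.flip_mw {U W : Type} (M : Matching U W) : M.flip.mw = M.mu := rfl

lemma IsStable.flip {U W : Type} [DecidableEq U] [DecidableEq W]
    {P : Profile U W} {M : Matching U W} (h : IsStable P M) :
    IsStable P.flip M.flip := by
  constructor
  · intro w u hw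
    have := h.1 u w ((M.consistent u w).mpr hw)
    exact ⟨this.2, this.1⟩
  · intro w u hb
    obtain ⟨h1, h2, h3, h4, h5⟩ := hb
    exact h.2 u w ⟨h2, h1, fun hc => h3 ((M.consistent u w).mp hc), h5, h4⟩

end Aux

/-- If a stable matching of `P` leaves `s` agents unmatched, then a perfect
matching that is stable in some profile at swap distance at most `t` from `P`
requires `2t ≥ s`. -/
theorem perfect_nearly_stable_needs_many_swaps
    {U W : Type} [DecidableEq U] [DecidableEq W] [Fintype U] [Fintype W]
    (P : Profile U W) (M : Matching U W) (hM : IsStable P M) (s : ℕ)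
    (hs : s = (Finset.univ.filter (fun u : U => M.mu u = none)).card +
              (Finset.univ.filter (fun w : W => M.mw w = none)).card)
    (t : ℕ) (P' : Profile U W) (hd : profDist P P' ≤ (t : ℕ∞))
    (M' : Matching U W) (h' : IsStable P' M') (hp : IsPerfect M') :
    s ≤ 2 * t := by
  classical
  have hne : (∀ u : U, listDist (P.prefU u) (P'.prefU u) ≠ ⊤) ∧
      (∀ w : W, listDist (P.prefW w) (P'.prefW w) ≠ ⊤) := by
    constructor
    · intro u h
      have h1 : (⊤ : ℕ∞) ≤ (t : ℕ∞) := by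
        calc (⊤ : ℕ∞) = listDist (P.prefU u) (P'.prefU u) := h.symm
          _ ≤ ∑ u, listDist (P.prefU u) (P'.prefU u) :=
            Finset.single_le_sum (f := fun u => listDist (P.prefU u) (P'.prefU u))
              (fun i _ => zero_le) (Finset.mem_univ u)
          _ ≤ profDist P P' := le_self_add
          _ ≤ (t : ℕ∞) := hd
      rw [top_le_iff] at h1
      exact (WithTop.natCast_ne_top t) h1
    · intro w h
      have h1 : (⊤ : ℕ∞) ≤ (t : ℕ∞) := by
        calc (⊤ : ℕ∞) = listDist (P.prefW w) (P'.prefW w) := h.symm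
          _ ≤ ∑ w, listDist (P.prefW w) (P'.prefW w) :=
            Finset.single_le_sum (f := fun w => listDist (P.prefW w) (P'.prefW w))
              (fun i _ => zero_le) (Finset.mem_univ w)
          _ ≤ profDist P P' := le_add_self
          _ ≤ (t : ℕ∞) := hd
      rw [top_le_iff] at h1
      exact (WithTop.natCast_ne_top t) h1
  have htU : ∀ u, (P.prefU u).toFinset = (P'.prefU u).toFinset := by
    intro u
    by_contra h
    exact hne.1 u (by rw [listDist, if_neg h])
  have htW : ∀ w, (P.prefW w).toFinset = (P'.prefW w).toFinset := by
    intro w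
    by_contra h
    exact hne.2 w (by rw [listDist, if_neg h])
  have hNt : (∑ u, discordant (P.prefU u) (P'.prefU u)) +
      (∑ w, discordant (P.prefW w) (P'.prefW w)) ≤ t := by
    have heq : profDist P P' =
        (((∑ u, discordant (P.prefU u) (P'.prefU u)) +
          (∑ w, discordant (P.prefW w) (P'.prefW w)) : ℕ) : ℕ∞) := by
      rw [profDist]
      push_cast
      congr 1
      · exact Finset.sum_congr rfl (fun u _ => by rw [listDist, if_pos (htU u)])
      · exact Finset.sum_congr rfl (fun w _ => by rw [listDist, if_pos (htW w)])
    rw [heq] at hd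
    exact_mod_cast hd
  obtain ⟨f, hf⟩ : ∃ f : U → W, ∀ u, M'.mu u = some (f u) := by
    have := fun u => Option.ne_none_iff_exists'.mp (hp.1 u)
    choose f hf using this
    exact ⟨f, hf⟩
  obtain ⟨f', hf'⟩ : ∃ f' : W → U, ∀ w, M'.mw w = some (f' w) := by
    have := fun w => Option.ne_none_iff_exists'.mp (hp.2 w)
    choose f' hf' using this
    exact ⟨f', hf'⟩
  have h1 := core P P' M M' hM h' f hf htU htW
  have h2 := core P.flip P'.flip M.flip M'.flip hM.flip h'.flip f' hf' htW htU
  simp only [Matching.flip_mu, Profile.flip_prefU, Profile.flip_prefW] at h2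
  have h3 : (Finset.univ.filter (fun w : W => M.mw w = none)).card ≤
      (∑ w, discordant (P.prefW w) (P'.prefW w)) + (∑ u, discordant (P.prefU u) (P'.prefU u)) := by
    convert h2
    ext a
    exact ⟨fun h => Finset.mem_filter.mpr ⟨Finset.mem_univ _, (Finset.mem_filter.mp h).2⟩,
      fun h => Finset.mem_filter.mpr ⟨Finset.mem_univ _, (Finset.mem_filter.mp h).2⟩⟩
  omega
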